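/- Let H, K be closed subspaces of L², a ∈ 𝒢L∞ with aK = H, φ ∈ L∞, ψ = |a|⁻²·φ, and F = T_a^{K,H} = M_a|_K. Then T_φ^K = F* ∘ T_ψ^H ∘ F. Moreover, this is a unitary equivalence (i.e., F* = F⁻¹, so that M_a|_K : K → H is an isometric isomorphism) if and only if T_{1 − |a|²}^K = 0, or equivalently T_{ā − a⁻¹}^{H,K} = 0. -/

import Mathlib

open MeasureTheory

noncomputable section

/-! ## Setup: the circle, L², L∞, multiplication operators, Hardy space,
model spaces, and generalized Toeplitz operators -/

instance : Fact (0 < 2 * Real.pi) := ⟨by positivity⟩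

/-- The normalized Lebesgue (Haar) measure `dθ/2π` on the circle. -/
abbrev μH : Measure (AddCircle (2 * Real.pi)) := AddCircle.haarAddCircle

/-- The Lebesgue space `L²` of the circle. -/
abbrev L2 : Type := Lp ℂ 2 μH

/-- The space `L∞` of essentially bounded functions on the circle. -/
abbrev Linf : Type := Lp ℂ ⊤ μH

/-- Pointwise (a.e.) multiplication on `L∞`. -/
instance : Mul Linf :=
  ⟨fun f g => ((Lp.memLp g).smul (r := ⊤) (Lp.memLp f)).toLp (⇑f • ⇑g)⟩

/-- The constant function `1` as an element of `L∞`. -/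
instance : One Linf := ⟨(memLp_const (1 : ℂ)).toLp (fun _ => (1 : ℂ))⟩

/-- Complex conjugation on `L∞`. -/
instance : Star Linf :=
  ⟨fun f => ((Complex.conjCLE.toContinuousLinearMap).comp_memLp' (Lp.memLp f)).toLp
    ((starRingEnd ℂ) ∘ ⇑f)⟩

/-- Multiplication of an `L²` function by an `L∞` function. -/
def mulFun (φ : Linf) (f : L2) : L2 :=
  ((Lp.memLp f).smul (r := 2) (Lp.memLp φ)).toLp (⇑φ • ⇑f)

lemma mulFun_coe (φ : Linf) (f : L2) : mulFun φ f =ᵐ[μH] ⇑φ • ⇑f :=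
  MemLp.coeFn_toLp _

lemma mulFun_norm_le (φ : Linf) (f : L2) : ‖mulFun φ f‖ ≤ ‖φ‖ * ‖f‖ := by
  rw [mulFun, Lp.norm_toLp, Lp.norm_def, Lp.norm_def, ← ENNReal.toReal_mul]
  refine ENNReal.toReal_mono ?_ ?_
  · exact ENNReal.mul_ne_top (Lp.eLpNorm_ne_top φ) (Lp.eLpNorm_ne_top f)
  · exact eLpNorm_smul_le_eLpNorm_top_mul_eLpNorm 2 (Lp.aestronglyMeasurable f) ⇑φ

/-- The bounded multiplication operator `M_φ : L² → L²` for `φ ∈ L∞`. -/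
def mulCLM (φ : Linf) : L2 →L[ℂ] L2 :=
  LinearMap.mkContinuous
    { toFun := mulFun φ
      map_add' := by
        intro f g
        apply Lp.ext
        filter_upwards [mulFun_coe φ (f + g), mulFun_coe φ f, mulFun_coe φ g,
          Lp.coeFn_add f g, Lp.coeFn_add (mulFun φ f) (mulFun φ g)] with x h1 h2 h3 h4 h5
        simp only [Pi.smul_apply', Pi.add_apply] at *
        rw [h1, h5, h2, h3, h4]
        exact smul_add _ _ _
      map_smul' := by
        intro c f
        apply Lp.ext
        filter_upwards [mulFun_coe φ (c • f), mulFun_coe φ f,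
          Lp.coeFn_smul c f, Lp.coeFn_smul c (mulFun φ f)] with x h1 h2 h3 h4
        simp only [Pi.smul_apply', Pi.smul_apply, RingHom.id_apply] at *
        rw [h1, h4, h2, h3]
        exact smul_comm _ _ _ }
    ‖φ‖ (mulFun_norm_le φ)

/-- The image `a·K = {a f : f ∈ K}` of a subspace `K ⊆ L²` under multiplication by `a ∈ L∞`. -/
def smulSub (a : Linf) (K : Submodule ℂ L2) : Submodule ℂ L2 :=
  K.map (mulCLM a : L2 →ₗ[ℂ] L2)

/-- The Hardy space `H² = {f ∈ L² : f̂(n) = 0 for n < 0}`. -/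
def Hardy : Submodule ℂ L2 where
  carrier := {f | ∀ n : ℤ, n < 0 → fourierBasis.repr f n = 0}
  add_mem' := by
    intro f g hf hg n hn
    rw [map_add, lp.coeFn_add, Pi.add_apply, hf n hn, hg n hn, add_zero]
  zero_mem' := by
    intro n hn
    rw [map_zero, lp.coeFn_zero]
    rfl
  smul_mem' := by
    intro c f hf n hn
    rw [_root_.map_smul, lp.coeFn_smul, Pi.smul_apply, hf n hn, smul_zero]

lemma hardy_isClosed : IsClosed (Hardy : Set L2) := by
  have h : (Hardy : Set L2) =
      ⋂ n : {m : ℤ // m < 0}, {f : L2 | fourierBasis.repr f n.1 = 0} := by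
    ext f
    constructor
    · intro hf
      exact Set.mem_iInter.2 fun n => hf n.1 n.2
    · intro hf n hn
      exact Set.mem_iInter.1 hf ⟨n, hn⟩
  rw [h]
  refine isClosed_iInter fun n => isClosed_eq ?_ continuous_const
  have : (fun f : L2 => fourierBasis.repr f n.1) =
      fun f : L2 => (innerSL ℂ (fourierBasis n.1)) f := by
    funext f
    exact fourierBasis.repr_apply_apply f n.1
  rw [this]
  exact (innerSL ℂ (fourierBasis n.1)).continuous

instance : CompleteSpace Hardy := hardy_isClosed.completeSpace_coe

/-- The model space `K_θ = H² ⊖ θH² = H² ∩ (θH²)^⊥`. -/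
def modelSpace (θ : Linf) : Submodule ℂ L2 :=
  Hardy ⊓ (smulSub θ Hardy)ᗮ

instance (θ : Linf) : CompleteSpace (modelSpace θ) := by
  refine IsClosed.completeSpace_coe (hs := ?_)
  have h : (modelSpace θ : Set L2) = (Hardy : Set L2) ∩ ((smulSub θ Hardy)ᗮ : Set L2) := rfl
  rw [h]
  exact hardy_isClosed.inter (smulSub θ Hardy).isClosed_orthogonal

/-- The generalized Toeplitz operator `T_φ^{H₁,H₂} = P_{H₂} M_φ |_{H₁}`. -/
def genToeplitz (φ : Linf) (H₁ H₂ : Submodule ℂ L2) [CompleteSpace H₂] : H₁ →L[ℂ] H₂ :=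
  H₂.orthogonalProjectionOnto.comp ((mulCLM φ).comp H₁.subtypeL)

/-- The orthogonal projection of `L²` onto `H`, viewed as an operator `L² → L²`. -/
def projL (H : Submodule ℂ L2) [CompleteSpace H] : L2 →L[ℂ] L2 :=
  H.subtypeL.comp H.orthogonalProjectionOnto

/-- `φ ∈ H∞`: all negative Fourier coefficients of `φ` vanish. -/
def IsHardyInf (φ : Linf) : Prop := ∀ n : ℤ, n < 0 → fourierCoeff (⇑φ) n = 0

/-- `θ` is an inner function: `θ ∈ H∞` and `|θ| = 1` a.e. on the circle. -/
def IsInner (θ : Linf) : Prop :=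
  IsHardyInf θ ∧ ∀ᵐ x ∂μH, ‖(θ : AddCircle (2 * Real.pi) → ℂ) x‖ = 1

/-- `a ∈ 𝒢H∞` with explicit inverse `b ∈ H∞`. -/
def GHinfPair (a b : Linf) : Prop := IsHardyInf a ∧ IsHardyInf b ∧ a * b = 1

/-- `a ∈ 𝒢H∞`: `a` is invertible in the algebra `H∞`. -/
def IsGHinf (a : Linf) : Prop := ∃ b, GHinfPair a b

/-- `b ∈ 𝒢H̄∞`: `b` is the conjugate of an element of `𝒢H∞`. -/
def IsGHinfBar (b : Linf) : Prop := ∃ c, IsGHinf c ∧ b = star c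

/-- `a ∈ 𝒢L∞` with explicit inverse `b`. -/
def GLinfPair (a b : Linf) : Prop := a * b = 1 ∧ b * a = 1

/-- `a ∈ 𝒢L∞`: `a` is invertible in the algebra `L∞`. -/
def IsGLinf (a : Linf) : Prop := ∃ b, GLinfPair a b

/-- The kernel of an operator between subspaces of `L²`, viewed as a subspace of `L²`. -/
def subKer {K₁ K₂ : Submodule ℂ L2} (T : K₁ →L[ℂ] K₂) : Submodule ℂ L2 :=
  (LinearMap.ker (T : K₁ →ₗ[ℂ] K₂)).map K₁.subtype

/-- The range of an operator between subspaces of `L²`, viewed as a subspace of `L²`. -/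
def subRan {K₁ K₂ : Submodule ℂ L2} (T : K₁ →L[ℂ] K₂) : Submodule ℂ L2 :=
  (LinearMap.range (T : K₁ →ₗ[ℂ] K₂)).map K₂.subtype

/-- The image of a subspace `S ⊆ K₁` under `T : K₁ → K₂`, viewed as a subspace of `L²`. -/
def opImage {K₁ K₂ : Submodule ℂ L2} (T : K₁ →L[ℂ] K₂) (S : Submodule ℂ K₁) :
    Submodule ℂ L2 :=
  (S.map (T : K₁ →ₗ[ℂ] K₂)).map K₂.subtype

section Antilinear

variable {E : Type*} [NormedAddCommGroup E] [InnerProductSpace ℂ E]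

/-- `C` is antilinear: `C(f + a g) = C f + ā C g`. -/
def IsAntilinearMap (C : E → E) : Prop :=
  ∀ (f g : E) (a : ℂ), C (f + a • g) = C f + (starRingEnd ℂ a) • C g

/-- `Cs` is the antilinear adjoint of `C`: `⟨C f, g⟩ = conj ⟨f, Cs g⟩`. -/
def IsAntilinearAdjointOf (C Cs : E → E) : Prop :=
  ∀ f g : E, (inner ℂ (C f) g : ℂ) = (starRingEnd ℂ) (inner ℂ f (Cs g) : ℂ)

/-- `C` is an antilinear unitary: it is antilinear and its antilinear adjoint is its inverse. -/
def IsAntilinearUnitary (C : E → E) : Prop :=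
  IsAntilinearMap C ∧ ∃ Cs : E → E, IsAntilinearAdjointOf C Cs ∧
    Function.LeftInverse Cs C ∧ Function.RightInverse Cs C

/-- `T` is complex selfadjoint with respect to `C` (with inverse `Cinv`): `C T C⁻¹ = T*`. -/
def IsComplexSelfadjointWith [CompleteSpace E] (T : E →L[ℂ] E) (C Cinv : E → E) : Prop :=
  ∀ f : E, C (T (Cinv f)) = ContinuousLinearMap.adjoint T f

end Antilinear

/-! Since `aK = H`, the operator `F = T_a^{K,H}` is plain multiplication by `a`, so
compressions compose without loss: `F* T_ψ^H F = T_{ā ψ a}^K = T_φ^K` because `|ab| = 1`.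
In the same way `F* F = T_{|a|²}^K = I - T_{1-|a|²}^K` and, with `b = a⁻¹`,
`T_{ā-b}^{H,K} F = -T_{1-|a|²}^K`. As `F` is onto, `F* F = I` already forces `F F* = I`,
and `T_{ā-b}^{H,K}` vanishes iff its composite with `F` does. -/

lemma ContinuousLinearMap.comp_adjoint_eq_id_of_surjective {E F : Type*}
    [NormedAddCommGroup E] [InnerProductSpace ℂ E] [CompleteSpace E]
    [NormedAddCommGroup F] [InnerProductSpace ℂ F] [CompleteSpace F]
    {T : E →L[ℂ] F} (hT : Function.Surjective T)
    (h : (adjoint T).comp T = ContinuousLinearMap.id ℂ E) :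
    T.comp (adjoint T) = ContinuousLinearMap.id ℂ F := by
  ext y
  obtain ⟨x, rfl⟩ := hT y
  exact congrArg T (DFunLike.congr_fun h x)

lemma ContinuousLinearMap.comp_eq_zero_iff_of_surjective {R M₁ M₂ M₃ : Type*} [Semiring R]
    [TopologicalSpace M₁] [AddCommMonoid M₁] [Module R M₁]
    [TopologicalSpace M₂] [AddCommMonoid M₂] [Module R M₂]
    [TopologicalSpace M₃] [AddCommMonoid M₃] [Module R M₃]
    {F : M₁ →L[R] M₂} (hF : Function.Surjective F) {G : M₂ →L[R] M₃} :
    G.comp F = 0 ↔ G = 0 := by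
  refine ⟨fun h => ext fun y => ?_, fun h => h ▸ zero_comp F⟩
  obtain ⟨x, rfl⟩ := hF y
  exact DFunLike.congr_fun h x

namespace Linf

lemma coeFn_mul (φ χ : Linf) : ⇑(φ * χ) =ᵐ[μH] fun x => φ x * χ x :=
  MemLp.coeFn_toLp _

lemma coeFn_one : ⇑(1 : Linf) =ᵐ[μH] fun _ => (1 : ℂ) :=
  MemLp.coeFn_toLp _

lemma coeFn_star (φ : Linf) : ⇑(star φ) =ᵐ[μH] fun x => starRingEnd ℂ (φ x) :=
  MemLp.coeFn_toLp _

lemma ae_mul_eq_one {a b : Linf} (h : a * b = 1) : ∀ᵐ x ∂μH, a x * b x = 1 := by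
  have hfun : ⇑(a * b) =ᵐ[μH] ⇑(1 : Linf) := by rw [h]
  filter_upwards [coeFn_mul a b, coeFn_one, hfun] with x hab h₁ h
  rw [← hab, h, h₁]

lemma star_mul_mul_eq_of_mul_eq_one {a b : Linf} (hab : a * b = 1) (φ : Linf) :
    star a * ((star b * b * φ) * a) = φ := by
  refine Lp.ext ?_
  filter_upwards [coeFn_mul (star a) ((star b * b * φ) * a), coeFn_mul (star b * b * φ) a,
    coeFn_mul (star b * b) φ, coeFn_mul (star b) b, coeFn_star a, coeFn_star b,
    ae_mul_eq_one hab] with x h₁ h₂ h₃ h₄ h₅ h₆ hx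
  have hx' : starRingEnd ℂ (a x) * starRingEnd ℂ (b x) = 1 := by rw [← map_mul, hx, map_one]
  rw [h₁, h₂, h₃, h₄, h₅, h₆]
  linear_combination starRingEnd ℂ (a x) * starRingEnd ℂ (b x) * φ x * hx + φ x * hx'

lemma star_sub_mul_eq_of_mul_eq_one {a b : Linf} (hba : b * a = 1) :
    (star a - b) * a = star a * a - 1 := by
  refine Lp.ext ?_
  filter_upwards [coeFn_mul (star a - b) a, coeFn_mul (star a) a, Lp.coeFn_sub (star a) b,
    Lp.coeFn_sub (star a * a) 1, coeFn_one, ae_mul_eq_one hba] with x h₁ h₂ h₃ h₄ h₅ hx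
  rw [h₁, h₄, Pi.sub_apply, h₂, h₃, Pi.sub_apply, h₅, ← hx]
  ring

end Linf

local notation "⟪" x ", " y "⟫" => @inner ℂ _ _ x y

lemma coeFn_mulCLM (φ : Linf) (f : L2) : ⇑(mulCLM φ f) =ᵐ[μH] fun x => φ x * f x :=
  mulFun_coe φ f

lemma mulCLM_mul_apply (φ χ : Linf) (f : L2) :
    mulCLM (φ * χ) f = mulCLM φ (mulCLM χ f) := by
  refine Lp.ext ?_
  filter_upwards [coeFn_mulCLM (φ * χ) f, coeFn_mulCLM φ (mulCLM χ f), coeFn_mulCLM χ f,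
    Linf.coeFn_mul φ χ] with x h₁ h₂ h₃ h₄
  rw [h₁, h₂, h₃, h₄, mul_assoc]

lemma mulCLM_one_apply (f : L2) : mulCLM 1 f = f := by
  refine Lp.ext ?_
  filter_upwards [coeFn_mulCLM 1 f, Linf.coeFn_one] with x h₁ h₂
  rw [h₁, h₂, one_mul]

lemma mulCLM_sub_apply (φ χ : Linf) (f : L2) :
    mulCLM (φ - χ) f = mulCLM φ f - mulCLM χ f := by
  refine Lp.ext ?_
  filter_upwards [coeFn_mulCLM (φ - χ) f, coeFn_mulCLM φ f, coeFn_mulCLM χ f,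
    Lp.coeFn_sub φ χ, Lp.coeFn_sub (mulCLM φ f) (mulCLM χ f)] with x h₁ h₂ h₃ h₄ h₅
  rw [h₁, h₅, Pi.sub_apply, h₂, h₃, h₄, Pi.sub_apply, sub_mul]

lemma inner_mulCLM_right (φ : Linf) (f g : L2) :
    ⟪f, mulCLM φ g⟫ = ⟪mulCLM (star φ) f, g⟫ := by
  simp only [MeasureTheory.L2.inner_def, RCLike.inner_apply']
  refine integral_congr_ae ?_
  filter_upwards [coeFn_mulCLM φ g, coeFn_mulCLM (star φ) f, Linf.coeFn_star φ]
    with x h₁ h₂ h₃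
  rw [h₁, h₂, h₃, map_mul, Complex.conj_conj]
  ring

section GeneralizedToeplitz

variable {H₁ H₂ H₃ : Submodule ℂ L2}

lemma genToeplitz_apply (φ : Linf) [CompleteSpace H₂] (f : H₁) :
    genToeplitz φ H₁ H₂ f = H₂.orthogonalProjectionOnto (mulCLM φ f) :=
  rfl

lemma inner_genToeplitz_left (φ : Linf) [CompleteSpace H₂] (f : H₁) (g : H₂) :
    ⟪genToeplitz φ H₁ H₂ f, g⟫ = ⟪mulCLM φ f, (g : L2)⟫ :=
  Submodule.inner_orthogonalProjectionOnto_eq_of_mem_right g _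

lemma coe_genToeplitz_of_smulSub_le {φ : Linf} [CompleteSpace H₂] (h : smulSub φ H₁ ≤ H₂)
    (f : H₁) : (genToeplitz φ H₁ H₂ f : L2) = mulCLM φ f :=
  Submodule.starProjection_eq_self_iff.mpr (h ⟨f, f.2, rfl⟩)

lemma genToeplitz_surjective_of_smulSub_eq {φ : Linf} [CompleteSpace H₂]
    (h : smulSub φ H₁ = H₂) : Function.Surjective (genToeplitz φ H₁ H₂) := by
  intro g
  obtain ⟨f, hf, hfg⟩ : (g : L2) ∈ smulSub φ H₁ := h ▸ g.2
  exact ⟨⟨f, hf⟩, Subtype.ext ((coe_genToeplitz_of_smulSub_le h.le _).trans hfg)⟩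

lemma genToeplitz_one [CompleteSpace H₁] :
    genToeplitz 1 H₁ H₁ = ContinuousLinearMap.id ℂ H₁ := by
  ext f
  rw [genToeplitz_apply, mulCLM_one_apply,
    Submodule.orthogonalProjectionOnto_mem_subspace_eq_self]
  rfl

lemma genToeplitz_sub (φ χ : Linf) [CompleteSpace H₂] :
    genToeplitz (φ - χ) H₁ H₂ = genToeplitz φ H₁ H₂ - genToeplitz χ H₁ H₂ := by
  ext f
  rw [genToeplitz_apply, mulCLM_sub_apply, map_sub]
  rfl

lemma genToeplitz_comp_of_smulSub_le {φ : Linf} (χ : Linf) [CompleteSpace H₂]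
    [CompleteSpace H₃] (h : smulSub φ H₁ ≤ H₂) :
    (genToeplitz χ H₂ H₃).comp (genToeplitz φ H₁ H₂) = genToeplitz (χ * φ) H₁ H₃ := by
  ext f
  rw [ContinuousLinearMap.comp_apply, genToeplitz_apply χ, coe_genToeplitz_of_smulSub_le h,
    genToeplitz_apply, mulCLM_mul_apply]

lemma adjoint_genToeplitz_comp_of_smulSub_le {a : Linf} (χ : Linf) [CompleteSpace H₁]
    [CompleteSpace H₂] (h : smulSub a H₁ ≤ H₂) :
    (ContinuousLinearMap.adjoint (genToeplitz a H₁ H₂)).comp (genToeplitz χ H₃ H₂) =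
      genToeplitz (star a * χ) H₃ H₁ := by
  refine ContinuousLinearMap.ext fun f => ext_inner_right ℂ fun g => ?_
  rw [ContinuousLinearMap.comp_apply, ContinuousLinearMap.adjoint_inner_left,
    inner_genToeplitz_left, inner_genToeplitz_left, coe_genToeplitz_of_smulSub_le h,
    inner_mulCLM_right, mulCLM_mul_apply]

end GeneralizedToeplitz

/-- Corollary 2.18: with `aK = H`, `ψ = |a|⁻² φ` and
`F = T_a^{K,H} = M_a|_K`, one has `T_φ^K = F* T_ψ^H F`, and this is a unitary
equivalence (`F* = F⁻¹`) iff `T_{1 − |a|²}^K = 0`, equivalently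
`T_{ā − a⁻¹}^{H,K} = 0`. -/
theorem statement9 (H K : Submodule ℂ L2) [CompleteSpace H] [CompleteSpace K]
    (a b : Linf) (hab : GLinfPair a b) (haK : smulSub a K = H) (φ ψ : Linf)
    (hψ : ψ = (star b * b) * φ) :
    genToeplitz φ K K =
      (ContinuousLinearMap.adjoint (genToeplitz a K H)).comp
        ((genToeplitz ψ H H).comp (genToeplitz a K H)) ∧
    (((ContinuousLinearMap.adjoint (genToeplitz a K H)).comp (genToeplitz a K H) =
        ContinuousLinearMap.id ℂ K ∧
      (genToeplitz a K H).comp (ContinuousLinearMap.adjoint (genToeplitz a K H)) =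
        ContinuousLinearMap.id ℂ H) ↔
      genToeplitz (1 - star a * a) K K = 0) ∧
    (genToeplitz (1 - star a * a) K K = 0 ↔ genToeplitz (star a - b) H K = 0) := by
  obtain ⟨hab, hba⟩ := hab
  have hle : smulSub a K ≤ H := haK.le
  have hsurj := genToeplitz_surjective_of_smulSub_eq haK
  have hdefect : genToeplitz (1 - star a * a) K K =
      ContinuousLinearMap.id ℂ K -
        (ContinuousLinearMap.adjoint (genToeplitz a K H)).comp (genToeplitz a K H) := by
    rw [genToeplitz_sub, genToeplitz_one, adjoint_genToeplitz_comp_of_smulSub_le a hle]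
  have hcomp : (genToeplitz (star a - b) H K).comp (genToeplitz a K H) =
      -genToeplitz (1 - star a * a) K K := by
    rw [genToeplitz_comp_of_smulSub_le _ hle, Linf.star_sub_mul_eq_of_mul_eq_one hba,
      genToeplitz_sub, genToeplitz_sub, neg_sub]
  refine ⟨?_, ?_, ?_⟩
  · rw [genToeplitz_comp_of_smulSub_le ψ hle, adjoint_genToeplitz_comp_of_smulSub_le _ hle, hψ,
      Linf.star_mul_mul_eq_of_mul_eq_one hab]
  · rw [hdefect, sub_eq_zero, eq_comm (a := ContinuousLinearMap.id ℂ K)]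
    exact ⟨And.left, fun h => ⟨h, ContinuousLinearMap.comp_adjoint_eq_id_of_surjective hsurj h⟩⟩
  · rw [← ContinuousLinearMap.comp_eq_zero_iff_of_surjective hsurj, hcomp, neg_eq_zero]
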